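/- arXiv:1111.0224 — 2 statements merged into one kernel-verified Lean document; each statement's English description precedes it below -/
import Mathlib

section
/- Let G be a group, K ≤ G a subgroup, and n a positive integer such that G = K·ζ_n(G). Then ζ_n(K) = K ∩ ζ_n(G). -/
/-!
Every element `x ∈ ζ_n(K)` already lies in `ζ_n(G)`: writing `g = k z` with `k ∈ K` and
`z ∈ ζ_n(G)`, we have `⁅x, g⁆ = ⁅x, k⁆ · k ⁅x, z⁆ k⁻¹`, where `⁅x, z⁆ ∈ ζ_{n-1}(G)` and
`⁅x, k⁆ ∈ ζ_{n-1}(K)`. The hypothesis `G = K ζ_n(G)` does not descend to `ζ_{n-1}`, so the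
induction carries the extra information that the element lies in `γ_{n-i}(G)`; the mixed
commutator law `⁅γ_j(G), ζ_{m+1+j}(G)⁆ ≤ ζ_m(G)` (three subgroups lemma) then handles the
`⁅x, z⁆` factor at every level.
-/

namespace Subgroup

open scoped commutatorElement

variable {G : Type*} [Group G]

theorem commutator_commutator_le_of_rotate {H₁ H₂ H₃ N : Subgroup G} [N.Normal]
    (h1 : ⁅⁅H₂, H₃⁆, H₁⁆ ≤ N) (h2 : ⁅⁅H₃, H₁⁆, H₂⁆ ≤ N) : ⁅⁅H₁, H₂⁆, H₃⁆ ≤ N := by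
  have le_iff_map_eq_bot : ∀ A B C : Subgroup G, ⁅⁅A, B⁆, C⁆ ≤ N ↔
      ⁅⁅A.map (QuotientGroup.mk' N), B.map (QuotientGroup.mk' N)⁆,
        C.map (QuotientGroup.mk' N)⁆ = ⊥ := by
    intro A B C
    rw [← map_commutator, ← map_commutator, map_eq_bot_iff, QuotientGroup.ker_mk']
  rw [le_iff_map_eq_bot] at h1 h2 ⊢
  exact commutator_commutator_eq_bot_of_rotate h1 h2

theorem commutator_top_upperCentralSeries_le (m : ℕ) :
    ⁅(⊤ : Subgroup G), upperCentralSeries G (m + 1)⁆ ≤ upperCentralSeries G m :=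
  commutator_comm (G := G) _ _ ▸ commutator_upperCentralSeries_top_le G m

theorem commutator_lowerCentralSeries_upperCentralSeries_le (j m : ℕ) :
    ⁅(⊤ : Subgroup G).lowerCentralSeries j, upperCentralSeries G (m + 1 + j)⁆ ≤
      upperCentralSeries G m := by
  induction j generalizing m with
  | zero => exact commutator_top_upperCentralSeries_le m
  | succ j ih =>
    apply commutator_commutator_le_of_rotate
    · calc ⁅⁅⊤, upperCentralSeries G (m + 1 + j + 1)⁆, (⊤ : Subgroup G).lowerCentralSeries j⁆
          ≤ ⁅upperCentralSeries G (m + 1 + j), (⊤ : Subgroup G).lowerCentralSeries j⁆ :=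
            commutator_mono (commutator_top_upperCentralSeries_le _) le_rfl
        _ ≤ upperCentralSeries G m := commutator_comm (G := G) _ _ ▸ ih m
    · have hidx : m + 1 + (j + 1) = m + 1 + 1 + j := by omega
      calc ⁅⁅upperCentralSeries G (m + 1 + (j + 1)), (⊤ : Subgroup G).lowerCentralSeries j⁆, ⊤⁆
          ≤ ⁅upperCentralSeries G (m + 1), ⊤⁆ :=
            commutator_mono (hidx ▸ commutator_comm (G := G) _ _ ▸ ih (m + 1)) le_rfl
        _ ≤ upperCentralSeries G m := commutator_upperCentralSeries_top_le G m

theorem comap_subtype_upperCentralSeries_le (K : Subgroup G) (i : ℕ) :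
    (upperCentralSeries G i).comap K.subtype ≤ upperCentralSeries K i := by
  induction i with
  | zero => exact fun x hx => Subtype.ext hx
  | succ i ih => exact fun x hx y => ih (hx y)

theorem coe_mem_upperCentralSeries_of_mem_lowerCentralSeries {K : Subgroup G} {n : ℕ}
    (hKZ : ∀ g : G, ∃ k ∈ K, ∃ z ∈ upperCentralSeries G n, g = k * z)
    {i j : ℕ} (hij : i + j = n) {x : K} (hx : x ∈ upperCentralSeries K i)
    (hxγ : (x : G) ∈ (⊤ : Subgroup G).lowerCentralSeries j) :
    (x : G) ∈ upperCentralSeries G i := by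
  induction i generalizing j x with
  | zero => simp [(mem_bot.mp hx : x = 1)]
  | succ i ih =>
    rw [mem_upperCentralSeries_succ_iff]
    intro g
    obtain ⟨k, hk, z, hz, rfl⟩ := hKZ g
    have hxk : ⁅(x : G), k⁆ ∈ upperCentralSeries G i :=
      ih (j := j + 1) (by omega) (hx ⟨k, hk⟩) (commutator_mem_commutator hxγ (mem_top k))
    have hxz : ⁅(x : G), z⁆ ∈ upperCentralSeries G i :=
      commutator_lowerCentralSeries_upperCentralSeries_le j i
        (commutator_mem_commutator hxγ (hij ▸ hz))
    rw [commutatorElement_mul_right_eq_mul_conj, mul_assoc _ k, mul_assoc _ (k * _)]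
    exact mul_mem hxk (normal_of_characteristic _ |>.conj_mem _ hxz k)

end Subgroup

theorem hekster_upperCentral_general (G : Type*) [Group G] (K : Subgroup G) (n : ℕ)
    (hKZ : ∀ g : G, ∃ k ∈ K, ∃ z ∈ upperCentralSeries G n, g = k * z) :
    Subgroup.map K.subtype (upperCentralSeries K n) = K ⊓ upperCentralSeries G n := by
  refine le_antisymm ?_ ?_
  · rintro _ ⟨x, hx, rfl⟩
    exact ⟨x.2, Subgroup.coe_mem_upperCentralSeries_of_mem_lowerCentralSeries hKZ (add_zero n)
      hx (Subgroup.mem_top (x : G))⟩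
  · rw [inf_comm, ← Subgroup.subgroupOf_map_subtype]
    exact Subgroup.map_mono (Subgroup.comap_subtype_upperCentralSeries_le K n)

/-- **Hekster's lemma, part 2.** If `G = K·ζ_n(G)` then
`ζ_n(K) = K ∩ ζ_n(G)`. -/
theorem hekster_upperCentral (G : Type*) [Group G] (K : Subgroup G) (n : ℕ)
    (hn : 0 < n)
    (hKZ : ∀ g : G, ∃ k ∈ K, ∃ z ∈ upperCentralSeries G n, g = k * z) :
    Subgroup.map K.subtype (upperCentralSeries K n) = K ⊓ upperCentralSeries G n :=
  hekster_upperCentral_general G K n hKZ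
end

section
/- Let G be a group whose upper hypercenter Z has finite index, and let K be a finitely generated subgroup with G = KZ. If C is the upper hypercenter of K, then C = C ∩ Z (i.e. the hypercenter of K is contained in Z). -/
variable (G : Type*) [Group G]

/-- `SubHypercenter G H` means that `H` is contained in some term of the
transfinite upper central series of `G`:  `⊥ = ζ_0` qualifies, any subgroup
`K` with `[K,G] ≤ H` for a qualifying `H` qualifies (successor step), and a
supremum of qualifying subgroups qualifies (limit step). -/
inductive SubHypercenter : Subgroup G → Prop
  | bot : SubHypercenter ⊥
  | step (H K : Subgroup G) : SubHypercenter H →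
      (∀ x ∈ K, ∀ y : G, x * y * x⁻¹ * y⁻¹ ∈ H) → SubHypercenter K
  | sup (s : Set (Subgroup G)) : (∀ H ∈ s, SubHypercenter H) →
      SubHypercenter (sSup s)

/-- The upper hypercenter `ζ_∞(G)`: the last (stable) term of the transfinite
upper central series of `G`. -/
def hypercenter : Subgroup G := sSup {H : Subgroup G | SubHypercenter G H}

/-- A group is hypercentral if it coincides with its upper hypercenter. -/
def IsHypercentral : Prop := hypercenter G = ⊤

section Aux
variable {G}


lemma subHyp_hypercenter : SubHypercenter G (hypercenter G) :=
  SubHypercenter.sup _ (fun _ hH => hH)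

lemma subHyp_le_hypercenter {H : Subgroup G} (h : SubHypercenter G H) :
    H ≤ hypercenter G := le_sSup h

lemma subHyp_map (e : G ≃* G) {H : Subgroup G} (h : SubHypercenter G H) :
    SubHypercenter G (H.map e.toMonoidHom) := by
  induction h with
  | bot => simpa using SubHypercenter.bot (G := G)
  | step H K hH hcomm ih =>
      refine SubHypercenter.step (H.map e.toMonoidHom) (K.map e.toMonoidHom) ih ?_
      rintro x ⟨a, ha, rfl⟩ y
      refine ⟨a * e.symm y * a⁻¹ * (e.symm y)⁻¹, hcomm a ha (e.symm y), ?_⟩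
      simp [mul_assoc]
  | sup s hs ih =>
      have hmap : (sSup s).map e.toMonoidHom = sSup ((fun H => Subgroup.map e.toMonoidHom H) '' s) := by
        rw [sSup_image]
        exact (Subgroup.gc_map_comap e.toMonoidHom).l_sSup
      rw [hmap]
      exact SubHypercenter.sup _ (by rintro T ⟨H, hH, rfl⟩; exact ih H hH)

instance hypercenter_normal : (hypercenter G).Normal := by
  constructor
  intro n hn g
  have h1 : SubHypercenter G ((hypercenter G).map (MulAut.conj g : G ≃* G).toMonoidHom) :=
    subHyp_map _ subHyp_hypercenter
  have h2 := subHyp_le_hypercenter h1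
  exact h2 ⟨n, hn, rfl⟩

lemma comm_mem_hypercenter {x : G} (hx : x ∈ hypercenter G) (g : G) :
    x * g * x⁻¹ * g⁻¹ ∈ hypercenter G := by
  let S : Subgroup G :=
    { carrier := {x | ∀ g : G, x * g * x⁻¹ * g⁻¹ ∈ hypercenter G}
      one_mem' := by intro g; simpa using (hypercenter G).one_mem
      mul_mem' := by
        intro a b ha hb g
        have h1 : a * (b * g * b⁻¹ * g⁻¹) * a⁻¹ ∈ hypercenter G :=
          hypercenter_normal.conj_mem _ (hb g) a
        have h2 := ha g
        have : (a * (b * g * b⁻¹ * g⁻¹) * a⁻¹) * (a * g * a⁻¹ * g⁻¹)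
            = (a * b) * g * (a * b)⁻¹ * g⁻¹ := by group
        rw [← this]
        exact mul_mem h1 h2
      inv_mem' := by
        intro a ha g
        have h1 : a⁻¹ * (a * g * a⁻¹ * g⁻¹)⁻¹ * a ∈ hypercenter G := by
          have := hypercenter_normal.conj_mem _ (inv_mem (ha g)) a⁻¹
          simpa using this
        have : a⁻¹ * (a * g * a⁻¹ * g⁻¹)⁻¹ * a = a⁻¹ * g * (a⁻¹)⁻¹ * g⁻¹ := by group
        rwa [this] at h1 }
  have hZS : hypercenter G ≤ S := by
    refine sSup_le ?_
    intro H hH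
    induction hH with
    | bot => exact bot_le
    | step H K hH hcomm ih =>
        intro x hx g
        exact subHyp_le_hypercenter hH (hcomm x hx g)
    | sup s hs ih => exact sSup_le ih
  exact hZS hx g

open Pointwise in
lemma subHyp_join (K : Subgroup G)
    (hKZ : ∀ g : G, ∃ k ∈ K, ∃ z ∈ hypercenter G, g = k * z)
    {H : Subgroup K} (h : SubHypercenter K H) :
    SubHypercenter G (Subgroup.map K.subtype H ⊔ hypercenter G) := by
  induction h with
  | bot => simpa using subHyp_hypercenter
  | step H' K' hH' hcomm ih =>
      refine SubHypercenter.step _ _ ih ?_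
      intro x hx g
      have hxmem : x ∈ (Subgroup.map K.subtype K' : Set G) * (hypercenter G : Set G) := by
        rw [← Subgroup.mul_normal]; exact hx
      obtain ⟨a, ha, z, hz, hxe⟩ := hxmem
      obtain ⟨k, hk, z', hz', rfl⟩ := hKZ g
      subst hxe
      have hzq : ((z : G) : G ⧸ hypercenter G) = 1 := (QuotientGroup.eq_one_iff z).mpr hz
      have hz'q : ((z' : G) : G ⧸ hypercenter G) = 1 := (QuotientGroup.eq_one_iff z').mpr hz'
      have hw : (a * z) * (k * z') * (a * z)⁻¹ * (k * z')⁻¹ * (a * k * a⁻¹ * k⁻¹)⁻¹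
          ∈ hypercenter G := by
        rw [← QuotientGroup.eq_one_iff]
        simp only [QuotientGroup.mk_mul, QuotientGroup.mk_inv, hzq, hz'q, mul_one, one_mul]
        group
      have hak : a * k * a⁻¹ * k⁻¹ ∈ Subgroup.map K.subtype H' := by
        obtain ⟨a', ha', rfl⟩ := ha
        exact ⟨a' * ⟨k, hk⟩ * a'⁻¹ * (⟨k, hk⟩ : K)⁻¹, hcomm a' ha' ⟨k, hk⟩, rfl⟩
      have hdecomp : (a * z) * (k * z') * (a * z)⁻¹ * (k * z')⁻¹
          = ((a * z) * (k * z') * (a * z)⁻¹ * (k * z')⁻¹ * (a * k * a⁻¹ * k⁻¹)⁻¹)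
            * (a * k * a⁻¹ * k⁻¹) := by group
      rw [hdecomp]
      exact mul_mem (Subgroup.mem_sup_right hw) (Subgroup.mem_sup_left hak)
  | sup s hs ih =>
      rcases s.eq_empty_or_nonempty with rfl | ⟨H₀, hH₀⟩
      · simpa using subHyp_hypercenter
      · have heq : Subgroup.map K.subtype (sSup s) ⊔ hypercenter G
            = sSup ((fun H => Subgroup.map K.subtype H ⊔ hypercenter G) '' s) := by
          apply le_antisymm
          · refine sup_le ?_ (le_trans le_sup_right (le_sSup ⟨H₀, hH₀, rfl⟩))
            rw [(Subgroup.gc_map_comap K.subtype).l_sSup]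
            exact iSup_le fun H => iSup_le fun hH =>
              le_trans le_sup_left (le_sSup ⟨H, hH, rfl⟩)
          · refine sSup_le ?_
            rintro T ⟨H, hH, rfl⟩
            exact sup_le (le_sup_of_le_left (Subgroup.map_mono (le_sSup hH))) le_sup_right
        rw [heq]
        exact SubHypercenter.sup _ (by rintro T ⟨H, hH, rfl⟩; exact ih H hH)


end Aux

/-- From the proof of Theorem A.  Suppose `Z = ζ_∞(G)` has finite index in
`G` and the upper central series of `G` has infinite length (equivalently,
`G/Z` is not nilpotent), and let `K` be a finitely generated subgroup with
`G = K·Z`.  Then the upper hypercenter `C` of `K` is contained in `Z`,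
i.e. `C = C ∩ Z`. -/
theorem hypercenter_of_supplement_le (G : Type*) [Group G]
    (hfin : Finite (G ⧸ hypercenter G))
    (hzl : ∀ n : ℕ, upperCentralSeries G n ≠ hypercenter G)
    (K : Subgroup G) (hKfg : K.FG)
    (hKZ : ∀ g : G, ∃ k ∈ K, ∃ z ∈ hypercenter G, g = k * z) :
    Subgroup.map K.subtype (hypercenter K) ≤ hypercenter G :=
    (Subgroup.map_le_iff_le_comap).mpr <| sSup_le fun H hH =>
    (Subgroup.map_le_iff_le_comap).mp <|
      le_trans le_sup_left (subHyp_le_hypercenter (subHyp_join K hKZ hH))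
end
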